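/- arXiv:1903.04683 — 3 statements merged into one kernel-verified Lean document; each statement's English description precedes it below -/
import Mathlib

section
/- For gl(2|1) with β = δ_2 - ε_1 and λ = (a_2, a_1 | b_1) satisfying a_2 + b_1 + 1 = 0, the vector S_{-β} v = (E_{1,\bar{1}} E_{\bar{1},\bar{2}} + (a_2 - a_1) E_{1,\bar{2}}) v in the Verma module M(λ) is annihilated by the raising operators E_{\bar{2},\bar{1}}, i.e. E_{\bar{2},\bar{1}} · S_{-β} v = 0. -/
open scoped BigOperators

namespace GLmn

/-- Index set for `gl(m|n)`: positions `0,...,m-1` are the barred indices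
`\bar m, ..., \bar 1` and positions `m,...,m+n-1` are the unbarred indices `1,...,n`. -/
abbrev Idx (m n : ℕ) := Fin (m + n)

/-- `true` iff the index is unbarred (i.e. on the `ε` side). -/
def unb (m n : ℕ) (i : Idx m n) : Bool := decide (m ≤ (i : ℕ))

/-- The sign `(-1)^{|E_{ij}||E_{kl}|}` in the supercommutator formula. -/
def sgn (m n : ℕ) (i j k l : Idx m n) : ℂ :=
  if (unb m n i ≠ unb m n j) ∧ (unb m n k ≠ unb m n l) then -1 else 1

/-- Defining relations of `U(gl(m|n))`: the supercommutation relations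
`E_{ij} E_{kl} - (-1)^{|E_{ij}||E_{kl}|} E_{kl} E_{ij}
  = δ_{jk} E_{il} - (-1)^{|E_{ij}||E_{kl}|} δ_{li} E_{kj}`. -/
inductive Rel (m n : ℕ) :
    FreeAlgebra ℂ (Idx m n × Idx m n) → FreeAlgebra ℂ (Idx m n × Idx m n) → Prop
  | super (i j k l : Idx m n) :
      Rel m n (FreeAlgebra.ι ℂ (i, j) * FreeAlgebra.ι ℂ (k, l))
        (sgn m n i j k l • (FreeAlgebra.ι ℂ (k, l) * FreeAlgebra.ι ℂ (i, j))
          + (if j = k then FreeAlgebra.ι ℂ (i, l) else 0)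
          - sgn m n i j k l • (if l = i then FreeAlgebra.ι ℂ (k, j) else 0))

/-- The universal enveloping algebra `U(gl(m|n))`. -/
abbrev U (m n : ℕ) := RingQuot (Rel m n)

/-- The generator `E_{i,j}` of `U(gl(m|n))`. -/
def E (m n : ℕ) (i j : Idx m n) : U m n :=
  RingQuot.mkAlgHom ℂ (Rel m n) (FreeAlgebra.ι ℂ (i, j))

/-- `E_{i,j}` with natural-number indices (junk value `0` out of range). -/
def En (m n : ℕ) (i j : ℕ) : U m n :=
  if h : i < m + n ∧ j < m + n then E m n ⟨i, h.1⟩ ⟨j, h.2⟩ else 0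

/-- The left ideal of `U(gl(m|n))` generated by `n^+` and by `h - λ(h)`, `h ∈ h`. -/
def hwIdeal (m n : ℕ) (lam : Idx m n → ℂ) : Submodule (U m n) (U m n) :=
  Submodule.span (U m n)
    ({x | ∃ i j : Idx m n, (i : ℕ) < (j : ℕ) ∧ x = E m n i j} ∪
     {x | ∃ i : Idx m n, x = E m n i i - algebraMap ℂ (U m n) (lam i)})

/-- The Verma module `M(λ)` of `gl(m|n)`. -/
abbrev Verma (m n : ℕ) (lam : Idx m n → ℂ) := U m n ⧸ hwIdeal m n lam

/-- The highest weight vector `v_λ ∈ M(λ)`. -/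
def hv (m n : ℕ) (lam : Idx m n → ℂ) : Verma m n lam := Submodule.Quotient.mk 1

/-- The subalgebra `U(n^-) ⊆ U(gl(m|n))` generated by the lower-triangular `E_{ij}`. -/
def Uneg (m n : ℕ) : Subalgebra ℂ (U m n) :=
  Algebra.adjoin ℂ {x | ∃ i j : Idx m n, (j : ℕ) < (i : ℕ) ∧ x = E m n i j}

/-- `J_λ ⊆ M(λ)`: the `n^-`-submodule generated by the vectors `E_{\bar{i-1},\bar i} v_λ`
(`1 < i ≤ m`) and `E_{j+1,j} v_λ` (`1 ≤ j < n`), i.e. by `E_{k,l} v_λ` for consecutive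
lower-triangular even pairs `k = l+1`, `k ≠ m` (position `m` is the odd pair `(1,\bar 1)`). -/
def Jlam (m n : ℕ) (lam : Idx m n → ℂ) : Submodule ℂ (Verma m n lam) :=
  Submodule.span ℂ
    {w | ∃ u ∈ Uneg m n, ∃ k l : Idx m n,
      (l : ℕ) + 1 = (k : ℕ) ∧ (k : ℕ) ≠ m ∧ w = u • (E m n k l • hv m n lam)}

/-- `I_λ ⊆ M(λ)`: the `g`-submodule generated by the singular vectors
`E_{\bar{i-1},\bar i}^{a_i - a_{i-1} + 1} v_λ` and `E_{j+1,j}^{b_j - b_{j+1} + 1} v_λ`;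
the exponents are recorded by a function `e` (`e l = λ_l - λ_{l+1} + 1`). -/
def Ilam (m n : ℕ) (lam : Idx m n → ℂ) (e : ℕ → ℕ) : Submodule (U m n) (Verma m n lam) :=
  Submodule.span (U m n)
    {w | ∃ k l : Idx m n,
      (l : ℕ) + 1 = (k : ℕ) ∧ (k : ℕ) ≠ m ∧ w = (E m n k l) ^ (e (l : ℕ)) • hv m n lam}

/-- The Kac module `K(λ) = M(λ)/I_λ`. -/
abbrev Kac (m n : ℕ) (lam : Idx m n → ℂ) (e : ℕ → ℕ) := Verma m n lam ⧸ Ilam m n lam e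

/-- `λ` evaluated at a natural-number position. -/
def lamn (m n : ℕ) (lam : Idx m n → ℂ) (k : ℕ) : ℂ :=
  if h : k < m + n then lam ⟨k, h⟩ else 0

/-- For `β = δ_s - ε_t` (position of `\bar s` is `m - s`, of `t` is `m + t - 1`), the
scalars `c_k`, `k ∈ I(s,t)` (positions strictly between `m-s` and `m+t-1`):
`c_{\bar i} = a_s - a_i + s - i - 1` at barred positions and
`c_j = b_t - b_j - (t - j)` at unbarred positions. -/
def cc (m n s t : ℕ) (lam : Idx m n → ℂ) (k : ℕ) : ℂ :=
  if k < m then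
    lamn m n lam (m - s) - lamn m n lam k + (k : ℂ) - ((m - s : ℕ) : ℂ) - 1
  else
    lamn m n lam (m + t - 1) - lamn m n lam k - ((m + t - 1 : ℕ) : ℂ) + (k : ℂ)

/-- The monomial `E_J = E_{t,j_p} E_{j_p,j_{p-1}} ⋯ E_{j_1,\bar s}` attached to a subset
`J = {j_1 < ⋯ < j_p}` of `I(s,t)` (with `E_∅ = E_{t,\bar s}`). -/
def EJ (m n s t : ℕ) (J : Finset ℕ) : U m n :=
  let L : List ℕ := (m - s) :: (J.sort (· ≤ ·) ++ [m + t - 1])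
  (List.zipWith (fun x y => En m n y x) L L.tail).reverse.prod

/-- The element `S_{-β} = ∑_{J} d_J E_J ∈ U(n^-)`, `β = δ_s - ε_t`, with
`d_J = ∏_{k ∈ I(s,t) \ J} c_k`. -/
def Sb (m n s t : ℕ) (lam : Idx m n → ℂ) : U m n :=
  ∑ J ∈ (Finset.Ioo (m - s) (m + t - 1)).powerset,
    (∏ k ∈ Finset.Ioo (m - s) (m + t - 1) \ J, cc m n s t lam k) • EJ m n s t J

lemma comm_rel (i j k l : Idx 2 1) :
    E 2 1 i j * E 2 1 k l =
      sgn 2 1 i j k l • (E 2 1 k l * E 2 1 i j)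
        + (if j = k then E 2 1 i l else 0)
        - sgn 2 1 i j k l • (if l = i then E 2 1 k j else 0) := by
  have h := RingQuot.mkAlgHom_rel ℂ (Rel.super (m := 2) (n := 1) i j k l)
  simpa [E, map_mul, map_add, map_sub, map_smul, apply_ite
    (RingQuot.mkAlgHom ℂ (Rel 2 1))] using h

set_option maxHeartbeats 1600000 in
set_option maxRecDepth 8000 in
/-- For `gl(2|1)` (indices `0 = \bar 2`, `1 = \bar 1`, `2 = 1`), `β = δ_2 - ε_1` and
`λ = (a_2, a_1 | b_1)` with `a_2 + b_1 + 1 = 0`, the vector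
`S_{-β} v_λ = (E_{1,\bar 1} E_{\bar 1,\bar 2} + (a_2 - a_1) E_{1,\bar 2}) v_λ` in the Verma
module `M(λ)` is annihilated by the raising operator `E_{\bar 2,\bar 1}`. -/
theorem stmt13 (a2 a1 b1 : ℂ) (hatyp : a2 + b1 + 1 = 0) :
    let lam : Idx 2 1 → ℂ := ![a2, a1, b1]
    let S : U 2 1 := E 2 1 2 1 * E 2 1 1 0 + (a2 - a1) • E 2 1 2 0
    E 2 1 0 1 • (S • hv 2 1 lam) = 0 := by
  intro lam S
  have key : ∀ u : U 2 1, u • hv 2 1 lam = Submodule.Quotient.mk u := by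
    intro u
    show u • Submodule.Quotient.mk 1 = _
    rw [← Submodule.Quotient.mk_smul, smul_eq_mul, mul_one]
  have hz : ∀ i j : Idx 2 1, (i : ℕ) < (j : ℕ) → E 2 1 i j • hv 2 1 lam = 0 := by
    intro i j h
    rw [key, Submodule.Quotient.mk_eq_zero]
    exact Submodule.subset_span (Or.inl ⟨i, j, h, rfl⟩)
  have hd : ∀ i : Idx 2 1,
      E 2 1 i i • hv 2 1 lam = algebraMap ℂ (U 2 1) (lam i) • hv 2 1 lam := by
    intro i
    rw [key (E 2 1 i i), key (algebraMap ℂ (U 2 1) (lam i))]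
    rw [Submodule.Quotient.eq]
    exact Submodule.subset_span (Or.inr ⟨i, rfl⟩)
  have h1 : E 2 1 0 1 * E 2 1 2 1 = E 2 1 2 1 * E 2 1 0 1 := by
    have := comm_rel 0 1 2 1
    simp only [sgn, unb] at this
    norm_num at this
    simpa using this
  have h2 : E 2 1 0 1 * E 2 1 1 0 = E 2 1 1 0 * E 2 1 0 1 + E 2 1 0 0 - E 2 1 1 1 := by
    have := comm_rel 0 1 1 0
    simp only [sgn, unb] at this
    norm_num at this
    simpa using this
  have h3 : E 2 1 0 1 * E 2 1 2 0 = E 2 1 2 0 * E 2 1 0 1 - E 2 1 2 1 := by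
    have := comm_rel 0 1 2 0
    simp only [sgn, unb] at this
    norm_num at this
    simpa using this
  have z01 : E 2 1 0 1 • hv 2 1 lam = 0 := hz 0 1 (by norm_num)
  have d0 : E 2 1 0 0 • hv 2 1 lam = algebraMap ℂ (U 2 1) a2 • hv 2 1 lam := by
    simpa [lam] using hd 0
  have d1 : E 2 1 1 1 • hv 2 1 lam = algebraMap ℂ (U 2 1) a1 • hv 2 1 lam := by
    simpa [lam] using hd 1
  have expand : E 2 1 0 1 * S =
      E 2 1 2 1 * (E 2 1 1 0 * E 2 1 0 1) + E 2 1 2 1 * E 2 1 0 0 - E 2 1 2 1 * E 2 1 1 1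
        + (a2 - a1) • (E 2 1 2 0 * E 2 1 0 1) - (a2 - a1) • E 2 1 2 1 := by
    simp only [S, mul_add, mul_smul_comm]
    rw [← mul_assoc, h1, mul_assoc, h2, h3]
    simp only [mul_add, mul_sub, smul_sub]
    rw [← add_sub_assoc]
  have t1 : (E 2 1 2 1 * (E 2 1 1 0 * E 2 1 0 1)) • hv 2 1 lam = 0 := by
    rw [mul_smul, mul_smul, z01, smul_zero, smul_zero]
  have t2 : (E 2 1 2 1 * E 2 1 0 0) • hv 2 1 lam =
      (algebraMap ℂ (U 2 1) a2 * E 2 1 2 1) • hv 2 1 lam := by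
    rw [mul_smul, d0, ← mul_smul, ← Algebra.commutes]
  have t3 : (E 2 1 2 1 * E 2 1 1 1) • hv 2 1 lam =
      (algebraMap ℂ (U 2 1) a1 * E 2 1 2 1) • hv 2 1 lam := by
    rw [mul_smul, d1, ← mul_smul, ← Algebra.commutes]
  have t4 : ((a2 - a1) • (E 2 1 2 0 * E 2 1 0 1)) • hv 2 1 lam = 0 := by
    rw [Algebra.smul_def, mul_smul, mul_smul, z01, smul_zero, smul_zero]
  have t5 : ((a2 - a1) • E 2 1 2 1) • hv 2 1 lam =
      (algebraMap ℂ (U 2 1) (a2 - a1) * E 2 1 2 1) • hv 2 1 lam := by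
    rw [Algebra.smul_def]
  rw [smul_smul, expand, sub_smul, add_smul, sub_smul, add_smul, t1, t2, t3, t4, t5]
  have comb : ∀ (x y : U 2 1) (w : Verma 2 1 lam), x • w - y • w = (x - y) • w :=
    fun x y w => (sub_smul x y w).symm
  rw [zero_add, add_zero, comb, comb]
  have hu : algebraMap ℂ (U 2 1) a2 * E 2 1 2 1 - algebraMap ℂ (U 2 1) a1 * E 2 1 2 1
      - algebraMap ℂ (U 2 1) (a2 - a1) * E 2 1 2 1 = 0 := by
    rw [map_sub, sub_mul]
    abel
  rw [hu]
  exact zero_smul _ _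

end GLmn
end

section
/- For gl(2|1) with β = δ_2 - ε_1 and λ = (a_2, a_1 | b_1) satisfying a_2 + b_1 + 1 = 0, the vector S_{-β} v = (E_{1,\bar{1}} E_{\bar{1},\bar{2}} + (a_2 - a_1) E_{1,\bar{2}}) v is annihilated by E_{\bar{1},1}, using the atypicality a_2 + b_1 + 1 = 0. -/
open scoped BigOperators

namespace GLmn

lemma Erel (m n : ℕ) (i j k l : Idx m n) :
    E m n i j * E m n k l = sgn m n i j k l • (E m n k l * E m n i j)
      + (if j = k then E m n i l else 0)
      - sgn m n i j k l • (if l = i then E m n k j else 0) := by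
  have h := RingQuot.mkAlgHom_rel ℂ (Rel.super (m := m) (n := n) i j k l)
  simp only [map_mul, map_add, map_sub, map_smul,
    apply_ite (RingQuot.mkAlgHom ℂ (Rel m n)), map_zero] at h
  simpa [E] using h

/-- For `gl(2|1)` (indices `0 = \bar 2`, `1 = \bar 1`, `2 = 1`), `β = δ_2 - ε_1` and
`λ = (a_2, a_1 | b_1)` with `a_2 + b_1 + 1 = 0`, the vector
`S_{-β} v_λ = (E_{1,\bar 1} E_{\bar 1,\bar 2} + (a_2 - a_1) E_{1,\bar 2}) v_λ` in the Verma
module `M(λ)` is annihilated by the odd raising operator `E_{\bar 1,1}` (using the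
atypicality `a_2 + b_1 + 1 = 0`). -/
theorem stmt14 (a2 a1 b1 : ℂ) (hatyp : a2 + b1 + 1 = 0) :
    let lam : Idx 2 1 → ℂ := ![a2, a1, b1]
    let S : U 2 1 := E 2 1 2 1 * E 2 1 1 0 + (a2 - a1) • E 2 1 2 0
    E 2 1 1 2 • (S • hv 2 1 lam) = 0 := by
  intro lam S
  have h1 : E 2 1 1 2 * E 2 1 2 1
      = (-1 : ℂ) • (E 2 1 2 1 * E 2 1 1 2) + E 2 1 1 1 + E 2 1 2 2 := by
    have h := Erel 2 1 1 2 2 1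
    norm_num [sgn, unb, Fin.ext_iff] at h
    rw [h]; try module
  have h2 : E 2 1 1 2 * E 2 1 1 0 = E 2 1 1 0 * E 2 1 1 2 := by
    have h := Erel 2 1 1 2 1 0
    norm_num [sgn, unb, Fin.ext_iff] at h
    rw [h]
  have h3 : E 2 1 1 2 * E 2 1 2 0 = (-1 : ℂ) • (E 2 1 2 0 * E 2 1 1 2) + E 2 1 1 0 := by
    have h := Erel 2 1 1 2 2 0
    norm_num [sgn, unb, Fin.ext_iff] at h
    rw [h]; try module
  have h4 : E 2 1 1 1 * E 2 1 1 0 = E 2 1 1 0 * E 2 1 1 1 + E 2 1 1 0 := by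
    have h := Erel 2 1 1 1 1 0
    norm_num [sgn, unb, Fin.ext_iff] at h
    rw [h]
  have h5 : E 2 1 2 2 * E 2 1 1 0 = E 2 1 1 0 * E 2 1 2 2 := by
    have h := Erel 2 1 2 2 1 0
    norm_num [sgn, unb, Fin.ext_iff] at h
    rw [h]
  have hcom : ∀ c : ℂ, E 2 1 1 0 * algebraMap ℂ (U 2 1) c = c • E 2 1 1 0 := fun c => by
    rw [← Algebra.commutes, ← Algebra.smul_def]
  have hkey : E 2 1 1 2 * S =
      ((-1 : ℂ) • (E 2 1 2 1 * (E 2 1 1 0 * E 2 1 1 2))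
        - (a2 - a1) • (E 2 1 2 0 * E 2 1 1 2))
      + E 2 1 1 0 * (E 2 1 1 1 - algebraMap ℂ (U 2 1) a1)
      + E 2 1 1 0 * (E 2 1 2 2 - algebraMap ℂ (U 2 1) b1)
      + (a2 + b1 + 1) • E 2 1 1 0 := by
    show E 2 1 1 2 * (E 2 1 2 1 * E 2 1 1 0 + (a2 - a1) • E 2 1 2 0) = _
    rw [mul_add, mul_smul_comm, ← mul_assoc, h1, h3]
    simp only [add_mul, smul_mul_assoc, mul_assoc, h2, h4, h5, mul_sub, smul_add, hcom]
    module
  have hE12 : E 2 1 1 2 ∈ hwIdeal 2 1 lam :=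
    Submodule.subset_span (Or.inl ⟨1, 2, by norm_num, rfl⟩)
  have hmem : E 2 1 1 2 * S ∈ hwIdeal 2 1 lam := by
    rw [hkey, hatyp, zero_smul, add_zero]
    refine Submodule.add_mem _ (Submodule.add_mem _ (Submodule.sub_mem _ ?_ ?_) ?_) ?_
    · exact Submodule.smul_of_tower_mem _ _
        (Submodule.smul_mem _ (E 2 1 2 1) (Submodule.smul_mem _ (E 2 1 1 0) hE12))
    · exact Submodule.smul_of_tower_mem _ _
        (Submodule.smul_mem _ (E 2 1 2 0) hE12)
    · refine Submodule.smul_mem _ (E 2 1 1 0) (Submodule.subset_span (Or.inr ⟨1, ?_⟩))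
      show _ = E 2 1 1 1 - algebraMap ℂ (U 2 1) a1
      rfl
    · refine Submodule.smul_mem _ (E 2 1 1 0) (Submodule.subset_span (Or.inr ⟨2, ?_⟩))
      show _ = E 2 1 2 2 - algebraMap ℂ (U 2 1) b1
      rfl
  show E 2 1 1 2 • (S • hv 2 1 lam) = 0
  rw [hv, ← Submodule.Quotient.mk_smul, ← Submodule.Quotient.mk_smul,
    Submodule.Quotient.mk_eq_zero]
  simpa [smul_eq_mul] using hmem

end GLmn
end

section
/- For gl(2|1), any vector of weight λ - (δ_2 - ε_1) in M(λ) annihilated by n^+ is a scalar multiple of (E_{1,\bar{1}} E_{\bar{1},\bar{2}} + (a_2 - a_1) E_{1,\bar{2}}) v; equivalently, writing a general weight-(λ-β) vector as (z_1 E_{1,\bar{1}} E_{\bar{1},\bar{2}} + z_0 E_{1,\bar{2}}) v, the conditions E_{\bar{2},\bar{1}}·(that vector) = 0 and E_{\bar{1},1}·(that vector) = 0, together with atypicality a_2+b_1+1=0, force z_0 = (a_2-a_1) z_1. -/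
open scoped BigOperators

namespace GLmn

noncomputable section VermaModel

open Polynomial

/-- The model space: 4 copies of `ℂ[x]`, slots `0=(00), 1=(10), 2=(01), 3=(11)`. -/
abbrev VV := Fin 4 → Polynomial ℂ

/-- Multiplication by `X`. -/
noncomputable def Xm : Polynomial ℂ →ₗ[ℂ] Polynomial ℂ := LinearMap.mulLeft ℂ Polynomial.X

@[simp] lemma Xm_apply (p : Polynomial ℂ) : Xm p = Polynomial.X * p := rfl

noncomputable def Dm : Polynomial ℂ →ₗ[ℂ] Polynomial ℂ := Polynomial.derivative

@[simp] lemma Dm_apply (p : Polynomial ℂ) : Dm p = Polynomial.derivative p := rfl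

noncomputable def pj (t : Fin 4) : VV →ₗ[ℂ] Polynomial ℂ := LinearMap.proj t

@[simp] lemma pj_apply (t : Fin 4) (p : VV) : pj t p = p t := rfl

noncomputable def opV (f : Fin 4 → (VV →ₗ[ℂ] Polynomial ℂ)) : Module.End ℂ VV :=
  LinearMap.pi f

@[simp] lemma opV_apply (f : Fin 4 → (VV →ₗ[ℂ] Polynomial ℂ)) (p : VV) (s : Fin 4) :
    opV f p s = f s p := rfl

variable (a2 a1 b1 : ℂ)

noncomputable def rho (a2 a1 b1 : ℂ) : Fin 3 → Fin 3 → Module.End ℂ VV :=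
![![ opV ![a2 • pj 0 - Xm ∘ₗ Dm ∘ₗ pj 0, (a2-1) • pj 1 - Xm ∘ₗ Dm ∘ₗ pj 1,
        a2 • pj 2 - Xm ∘ₗ Dm ∘ₗ pj 2, (a2-1) • pj 3 - Xm ∘ₗ Dm ∘ₗ pj 3],
    opV ![(a2-a1) • (Dm ∘ₗ pj 0) - Xm ∘ₗ Dm ∘ₗ Dm ∘ₗ pj 0,
        (a2-a1-1) • (Dm ∘ₗ pj 1) - Xm ∘ₗ Dm ∘ₗ Dm ∘ₗ pj 1,
        (a2-a1+1) • (Dm ∘ₗ pj 2) - Xm ∘ₗ Dm ∘ₗ Dm ∘ₗ pj 2 - pj 1,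
        (a2-a1) • (Dm ∘ₗ pj 3) - Xm ∘ₗ Dm ∘ₗ Dm ∘ₗ pj 3],
    opV ![(a2+b1) • pj 1 - Xm ∘ₗ Dm ∘ₗ pj 1 - (a1+b1) • (Dm ∘ₗ pj 2),
        (a1+b1) • (Dm ∘ₗ pj 3), (a2+b1+1) • pj 3 - Xm ∘ₗ Dm ∘ₗ pj 3, 0]],
  ![ opV ![Xm ∘ₗ pj 0, Xm ∘ₗ pj 1, Xm ∘ₗ pj 2, Xm ∘ₗ pj 3],
    opV ![a1 • pj 0 + Xm ∘ₗ Dm ∘ₗ pj 0, a1 • pj 1 + Xm ∘ₗ Dm ∘ₗ pj 1,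
        (a1-1) • pj 2 + Xm ∘ₗ Dm ∘ₗ pj 2, (a1-1) • pj 3 + Xm ∘ₗ Dm ∘ₗ pj 3],
    opV ![Xm ∘ₗ pj 1 + (a1+b1) • pj 2, -((a1+b1) • pj 3), Xm ∘ₗ pj 3, 0]],
  ![ opV ![0, pj 0, 0, pj 2],
    opV ![0, Dm ∘ₗ pj 0, pj 0, Dm ∘ₗ pj 2 - pj 1],
    opV ![b1 • pj 0, (b1+1) • pj 1, (b1+1) • pj 2, (b1+2) • pj 3]]]

@[simp] lemma C_two : (Polynomial.C (2:ℂ)) = 2 := by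
  have : ((2:ℂ)) = ((2:ℕ):ℂ) := by norm_num
  rw [this, Polynomial.C_eq_natCast]; norm_num

set_option maxHeartbeats 0 in
set_option maxHeartbeats 0 in
theorem rel_holds : ∀ ⦃x y : FreeAlgebra ℂ (Idx 2 1 × Idx 2 1)⦄, Rel 2 1 x y →
    (FreeAlgebra.lift ℂ (fun q : Idx 2 1 × Idx 2 1 => rho a2 a1 b1 q.1 q.2)) x =
    (FreeAlgebra.lift ℂ (fun q : Idx 2 1 × Idx 2 1 => rho a2 a1 b1 q.1 q.2)) y := by
  rintro x y ⟨i, j, k, l⟩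
  refine LinearMap.ext fun p => funext fun s => ?_
  fin_cases i <;> fin_cases j <;> fin_cases k <;> fin_cases l <;>
  · simp only [map_mul, map_add, map_sub, map_smul, FreeAlgebra.lift_ι_apply, sgn, unb,
      Fin.isValue, ne_eq, Fin.mk.injEq]
    norm_num
    all_goals
      fin_cases s <;>
      · simp only [rho, Matrix.cons_val_zero, Matrix.cons_val_one, Matrix.head_cons,
          Matrix.cons_val_two, Matrix.cons_val_three, Matrix.tail_cons, Fin.isValue, Fin.zero_eta,
          Fin.mk_one, Fin.reduceFinMk,
          Module.End.mul_apply, LinearMap.add_apply, LinearMap.sub_apply, LinearMap.smul_apply,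
          LinearMap.neg_apply, LinearMap.zero_apply, LinearMap.comp_apply, Module.End.one_apply,
          opV_apply, pj_apply, Xm_apply, Dm_apply, map_add, map_sub, map_neg, map_smul, map_zero,
          Polynomial.derivative_ofNat, neg_neg, neg_add_rev, neg_sub, mul_neg, neg_mul,
          Polynomial.derivative_mul, Polynomial.derivative_X, Polynomial.derivative_C,
          Polynomial.derivative_one, Polynomial.smul_eq_C_mul,
          Polynomial.C_sub, Polynomial.C_add, Polynomial.C_1, C_two, Pi.zero_apply,
          smul_zero, mul_zero, zero_mul, add_zero, zero_add, sub_zero, zero_sub, one_mul, mul_one,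
          neg_zero]
        try ring

noncomputable def rep : U 2 1 →ₐ[ℂ] Module.End ℂ VV :=
  RingQuot.liftAlgHom ℂ ⟨FreeAlgebra.lift ℂ (fun q : Idx 2 1 × Idx 2 1 => rho a2 a1 b1 q.1 q.2),
    rel_holds a2 a1 b1⟩

lemma rep_E (i j : Idx 2 1) : rep a2 a1 b1 (E 2 1 i j) = rho a2 a1 b1 i j := by
  rw [rep, E, RingQuot.liftAlgHom_mkAlgHom_apply, FreeAlgebra.lift_ι_apply]

/-- highest weight vector in the model -/
noncomputable def v0 : VV := ![1, 0, 0, 0]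

set_option maxHeartbeats 1000000 in
lemma vanish : ∀ x ∈ hwIdeal 2 1 ![a2, a1, b1], rep a2 a1 b1 x v0 = 0 := by
  intro x hx
  refine Submodule.span_induction ?_ ?_ ?_ ?_ hx
  · rintro x (⟨i, j, hij, rfl⟩ | ⟨i, rfl⟩)
    · rw [rep_E]
      fin_cases i <;> fin_cases j <;> simp only [Fin.mk.injEq] at hij <;> try omega
      all_goals
      · funext s
        fin_cases s <;>
          simp only [rho, v0, Matrix.cons_val_zero, Matrix.cons_val_one, Matrix.head_cons,
            Matrix.cons_val_two, Matrix.cons_val_three, Matrix.tail_cons, Fin.isValue,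
            Fin.zero_eta, Fin.mk_one, Fin.reduceFinMk, LinearMap.add_apply, LinearMap.sub_apply,
            LinearMap.smul_apply, LinearMap.neg_apply, LinearMap.zero_apply, LinearMap.comp_apply,
            opV_apply, pj_apply, Xm_apply, Dm_apply, map_zero, Polynomial.derivative_one,
            Pi.zero_apply, smul_zero, mul_zero, zero_mul, add_zero, zero_add, sub_zero, neg_zero,
            zero_sub, Polynomial.derivative_C, sub_self]
    · rw [map_sub, rep_E, AlgHom.commutes]
      have halg : ∀ c : ℂ, (algebraMap ℂ (Module.End ℂ VV) c) v0 = c • v0 := fun c => rfl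
      fin_cases i <;>
      · funext s
        rw [LinearMap.sub_apply, halg]
        fin_cases s <;>
          simp only [rho, v0, Matrix.cons_val_zero, Matrix.cons_val_one, Matrix.head_cons,
            Matrix.cons_val_two, Matrix.cons_val_three, Matrix.tail_cons, Fin.isValue,
            Fin.zero_eta, Fin.mk_one, Fin.reduceFinMk, LinearMap.add_apply, LinearMap.sub_apply,
            LinearMap.smul_apply, LinearMap.neg_apply, LinearMap.zero_apply, LinearMap.comp_apply,
            opV_apply, pj_apply, Xm_apply, Dm_apply, map_zero, Polynomial.derivative_one,
            Pi.sub_apply, Pi.smul_apply, Pi.zero_apply, smul_zero, mul_zero, zero_mul, add_zero,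
            zero_add, sub_zero, neg_zero, zero_sub, Polynomial.derivative_C, sub_self,
            smul_eq_mul, mul_one]
  · simp
  · intro u v _ _ hu hv
    rw [map_add, LinearMap.add_apply, hu, hv, add_zero]
  · intro u v _ hv
    rw [smul_eq_mul, map_mul, Module.End.mul_apply, hv, map_zero]

end VermaModel

/-- For `gl(2|1)` (indices `0 = \bar 2`, `1 = \bar 1`, `2 = 1`), `β = δ_2 - ε_1`,
`λ = (a_2, a_1 | b_1)` atypical (`a_2 + b_1 + 1 = 0`): any vector of weight `λ - β` in
`M(λ)` annihilated by `n^+` is a scalar multiple of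
`(E_{1,\bar 1} E_{\bar 1,\bar 2} + (a_2 - a_1) E_{1,\bar 2}) v_λ`.  Equivalently, writing a
general weight-`(λ-β)` vector as `(z_1 E_{1,\bar 1} E_{\bar 1,\bar 2} + z_0 E_{1,\bar 2}) v_λ`,
annihilation by `E_{\bar 2,\bar 1}` and by `E_{\bar 1,1}` forces `z_0 = (a_2 - a_1) z_1`. -/
theorem stmt15 (a2 a1 b1 z1 z0 : ℂ) (hatyp : a2 + b1 + 1 = 0) :
    let lam : Idx 2 1 → ℂ := ![a2, a1, b1]
    let w : Verma 2 1 lam :=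
      (z1 • (E 2 1 2 1 * E 2 1 1 0) + z0 • E 2 1 2 0) • hv 2 1 lam
    E 2 1 0 1 • w = 0 → E 2 1 1 2 • w = 0 → z0 = (a2 - a1) * z1 := by
  intro lam w _ h12
  set expr : U 2 1 := z1 • (E 2 1 2 1 * E 2 1 1 0) + z0 • E 2 1 2 0 with hexpr
  have hw : w = Submodule.Quotient.mk expr := by
    show expr • hv 2 1 lam = _
    rw [hv, ← Submodule.Quotient.mk_smul, smul_eq_mul, mul_one]
  have hmem : E 2 1 1 2 * expr ∈ hwIdeal 2 1 lam := by
    rw [← Submodule.Quotient.mk_eq_zero (hwIdeal 2 1 lam)]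
    have : (Submodule.Quotient.mk (E 2 1 1 2 * expr) : Verma 2 1 lam)
        = E 2 1 1 2 • w := by
      rw [hw, ← Submodule.Quotient.mk_smul, smul_eq_mul]
    rw [this, h12]
  have h0 := vanish a2 a1 b1 _ hmem
  rw [hexpr, map_mul, map_add, map_smul, map_smul, map_mul, rep_E, rep_E, rep_E, rep_E,
    Module.End.mul_apply] at h0
  have h1 := congrFun h0 0
  simp only [rho, v0, Matrix.cons_val_zero, Matrix.cons_val_one, Matrix.head_cons,
    Matrix.cons_val_two, Matrix.cons_val_three, Matrix.tail_cons, Fin.isValue, Fin.zero_eta,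
    Fin.mk_one, Fin.reduceFinMk, Module.End.mul_apply, LinearMap.add_apply, LinearMap.sub_apply,
    LinearMap.smul_apply, LinearMap.neg_apply, LinearMap.zero_apply, LinearMap.comp_apply,
    opV_apply, pj_apply, Xm_apply, Dm_apply, map_add, map_sub, map_neg, map_smul, map_zero,
    Polynomial.derivative_mul, Polynomial.derivative_X, Polynomial.derivative_C,
    Polynomial.derivative_one, Polynomial.smul_eq_C_mul, Polynomial.C_sub, Polynomial.C_add,
    Polynomial.C_1, C_two, Pi.zero_apply, Pi.add_apply, Pi.smul_apply, smul_zero, mul_zero,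
    zero_mul, add_zero, zero_add, sub_zero, zero_sub, one_mul, mul_one, neg_zero] at h1
  have h2 := congrArg (fun q => Polynomial.coeff q 1) h1
  simp only [Polynomial.coeff_add, Polynomial.coeff_smul, Polynomial.coeff_C_mul,
    Polynomial.coeff_X_one, Polynomial.coeff_zero, smul_eq_mul, Polynomial.coeff_mul_X,
    Polynomial.coeff_C, eq_self_iff_true, if_true, mul_one] at h2
  linear_combination h2 - z1 * hatyp

end GLmn
end
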